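/- Let r_i, r_j, r_k be positive reals and Φ_ij, Φ_jk, Φ_ik ∈ [0, π/2]. Then the three lengths l_ij = √(r_i² + r_j² + 2 r_i r_j cos Φ_ij), l_jk = √(r_j² + r_k² + 2 r_j r_k cos Φ_jk), l_ik = √(r_i² + r_k² + 2 r_i r_k cos Φ_ik) satisfy the strict triangle inequalities: l_ij < l_jk + l_ik, l_jk < l_ij + l_ik, and l_ik < l_ij + l_jk. In particular they are the side lengths of a nondegenerate Euclidean triangle. -/
import Mathlib


open Real

/-- The edge length assigned to edge `{i,j}` by the circle packing metric with
radii `a`, `b` and weight `φ`. -/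
noncomputable def ell (a b φ : ℝ) : ℝ := Real.sqrt (a ^ 2 + b ^ 2 + 2 * a * b * Real.cos φ)

lemma ell_comm (a b φ : ℝ) : ell a b φ = ell b a φ := by
  unfold ell; ring_nf

lemma gt_of_ell (a b φ : ℝ) (ha : 0 ≤ a) (hb : 0 < b) (h : 0 ≤ Real.cos φ) :
    a < ell a b φ := by
  rw [ell, show a ^ 2 + b ^ 2 + 2 * a * b * Real.cos φ =
    a ^ 2 + (b ^ 2 + 2 * a * b * Real.cos φ) by ring]
  have : a = Real.sqrt (a ^ 2) := (Real.sqrt_sq ha).symm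
  nth_rewrite 1 [this]
  apply Real.sqrt_lt_sqrt (sq_nonneg a)
  nlinarith [mul_nonneg (mul_nonneg (by linarith : (0:ℝ) ≤ 2 * a) hb.le) h]

lemma ell_le_add (a b φ : ℝ) (ha : 0 ≤ a) (hb : 0 ≤ b) : ell a b φ ≤ a + b := by
  have h := Real.cos_le_one φ
  calc ell a b φ ≤ Real.sqrt ((a + b) ^ 2) := Real.sqrt_le_sqrt (by
      nlinarith [mul_nonneg (mul_nonneg ha hb) (by linarith : (0:ℝ) ≤ 1 - Real.cos φ)])
    _ = a + b := Real.sqrt_sq (by linarith)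

/-- The three lengths coming from a circle packing metric with weights in `[0, π/2]`
satisfy the strict triangle inequalities. -/
theorem strict_triangle_inequalities
    (ri rj rk Φij Φjk Φik : ℝ)
    (hri : 0 < ri) (hrj : 0 < rj) (hrk : 0 < rk)
    (hΦij : Φij ∈ Set.Icc 0 (π / 2)) (hΦjk : Φjk ∈ Set.Icc 0 (π / 2))
    (hΦik : Φik ∈ Set.Icc 0 (π / 2)) :
    ell ri rj Φij < ell rj rk Φjk + ell ri rk Φik ∧
    ell rj rk Φjk < ell ri rj Φij + ell ri rk Φik ∧
    ell ri rk Φik < ell ri rj Φij + ell rj rk Φjk := by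
  have cij : 0 ≤ Real.cos Φij :=
    Real.cos_nonneg_of_mem_Icc ⟨by linarith [hΦij.1, Real.pi_pos], hΦij.2⟩
  have cjk : 0 ≤ Real.cos Φjk :=
    Real.cos_nonneg_of_mem_Icc ⟨by linarith [hΦjk.1, Real.pi_pos], hΦjk.2⟩
  have cik : 0 ≤ Real.cos Φik :=
    Real.cos_nonneg_of_mem_Icc ⟨by linarith [hΦik.1, Real.pi_pos], hΦik.2⟩
  have hii : ri < ell ri rk Φik := gt_of_ell ri rk Φik hri.le hrk cik
  have hjj : rj < ell rj rk Φjk := gt_of_ell rj rk Φjk hrj.le hrk cjk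
  have hij1 : ri < ell ri rj Φij := gt_of_ell ri rj Φij hri.le hrj cij
  have hij2 : rj < ell ri rj Φij := by
    rw [ell_comm]; exact gt_of_ell rj ri Φij hrj.le hri cij
  have hjk2 : rk < ell rj rk Φjk := by
    rw [ell_comm]; exact gt_of_ell rk rj Φjk hrk.le hrj cjk
  have hik2 : rk < ell ri rk Φik := by
    rw [ell_comm]; exact gt_of_ell rk ri Φik hrk.le hri cik
  refine ⟨?_, ?_, ?_⟩
  · calc ell ri rj Φij ≤ ri + rj := ell_le_add _ _ _ hri.le hrj.le
      _ < ell rj rk Φjk + ell ri rk Φik := by linarith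
  · calc ell rj rk Φjk ≤ rj + rk := ell_le_add _ _ _ hrj.le hrk.le
      _ < ell ri rj Φij + ell ri rk Φik := by linarith
  · calc ell ri rk Φik ≤ ri + rk := ell_le_add _ _ _ hri.le hrk.le
      _ < ell ri rj Φij + ell rj rk Φjk := by linarith
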